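/- arXiv:1208.1783 — 4 statements merged into one kernel-verified Lean document; each statement's English description precedes it below -/
import Mathlib

section
/- Every conservative weakly log-modular weighted constraint language is balanced. That is, if a weighted constraint language F over a finite domain D (with |D| ≥ 2) contains every unary function D → ℚ≥0 and is weakly log-modular, then F is balanced. -/
open scoped NNRat

/-- A weight function of some arity over domain `D`, taking values in `ℚ≥0`. -/
abbrev WFun (D : Type) : Type := Σ k : ℕ, (Fin k → D) → ℚ≥0

/-- The binary equality weight function. -/
def EQw (D : Type) [DecidableEq D] : (Fin 2 → D) → ℚ≥0 :=
  fun x => if x 0 = x 1 then 1 else 0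

/-- `F` is definable by a pps-formula over `𝓕 ∪ {EQ}`: a sum over `k` bound
variables of a product of `m` atomic formulas. -/
def InFClone {D : Type} [Fintype D] [DecidableEq D] (𝓕 : Set (WFun D)) {n : ℕ}
    (F : (Fin n → D) → ℚ≥0) : Prop :=
  ∃ (k m : ℕ) (ar : Fin m → ℕ) (G : ∀ j : Fin m, (Fin (ar j) → D) → ℚ≥0)
    (sc : ∀ j : Fin m, Fin (ar j) → Fin (n + k)),
    (∀ j : Fin m, (⟨ar j, G j⟩ : WFun D) ∈ 𝓕 ∨ (⟨ar j, G j⟩ : WFun D) = ⟨2, EQw D⟩) ∧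
    ∀ x : Fin n → D, F x = ∑ y : Fin k → D, ∏ j : Fin m, G j (fun i => Fin.append x y (sc j i))

/-- Weak log-modularity of a weighted constraint language. -/
def WeaklyLogModular {D : Type} [Fintype D] [DecidableEq D] (𝓕 : Set (WFun D)) : Prop :=
  ∀ F : (Fin 2 → D) → ℚ≥0, InFClone 𝓕 F → ∀ a b : D,
    F ![a, a] * F ![b, b] = F ![a, b] * F ![b, a] ∨
    (F ![a, a] = 0 ∧ F ![b, b] = 0) ∨
    (F ![a, b] = 0 ∧ F ![b, a] = 0)

/-- The bipartite adjacency relation of a matrix: a row and a column are adjacent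
iff the corresponding entry is non-zero. -/
def MatAdj {R C α : Type*} [Zero α] (M : R → C → α) : R ⊕ C → R ⊕ C → Prop
  | Sum.inl r, Sum.inr c => M r c ≠ 0
  | Sum.inr c, Sum.inl r => M r c ≠ 0
  | _, _ => False

/-- `M` has block-rank 1: every block (submatrix induced by a connected component
of the bipartite graph of `M`) has rank at most 1, i.e. there is a factorisation
`M r c = u r * v c` valid on every connected row/column pair. -/
def BlockRank1 {R C α : Type*} [Zero α] [Mul α] (M : R → C → α) : Prop :=
  ∃ (u : R → α) (v : C → α), ∀ r c,
    Relation.ReflTransGen (MatAdj M) (Sum.inl r) (Sum.inr c) → M r c = u r * v c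

/-- A weighted constraint language is balanced if, for every function in its
functional clone of arity `n = k + l ≥ 2` (with `k, l ≥ 1`), the associated
`|D|^k × |D|^l` matrix has block-rank 1. -/
def BalancedLang {D : Type} [Fintype D] [DecidableEq D] (𝓕 : Set (WFun D)) : Prop :=
  ∀ (k l : ℕ), 1 ≤ k → 1 ≤ l → ∀ F : (Fin (k + l) → D) → ℚ≥0, InFClone 𝓕 F →
    BlockRank1 (fun (x : Fin k → D) (y : Fin l → D) => F (Fin.append x y))

/-!
If any two rows of a matrix sharing a non-zero column are proportional, the matrix has
block-rank 1.

For the matrix of a function `F` of the clone with `k` row variables, this proportionality is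
proved by induction on `k`. For `k = 1`, weak log-modularity of the Gram function
`G(s, t) = ∑_y F(s, y) F(t, y)` is the equality case of Cauchy–Schwarz. For `k + 1` row
variables, conservativity allows summing the first row variable against any unary weight, such as
`δ_a + t δ_b`; the resulting functions have `k` row variables, and together with the case `k = 1`
applied to the first row variable alone they link any two rows sharing a non-zero column.
-/

theorem Fin.append_comp_append {α : Type*} {n n' k k' : ℕ} (x : Fin n' → α) (y : Fin k' → α)
    (σ : Fin n → Fin n') (τ : Fin k → Fin k') :
    Fin.append x y ∘ Fin.append (Fin.castAdd k' ∘ σ) (Fin.natAdd n' ∘ τ)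
      = Fin.append (x ∘ σ) (y ∘ τ) := by
  funext i
  refine Fin.addCases (fun i => ?_) (fun i => ?_) i <;> simp

@[simp] theorem Fin.append_comp_castAdd {α : Type*} {m n : ℕ} (u : Fin m → α) (v : Fin n → α) :
    Fin.append u v ∘ Fin.castAdd n = u :=
  funext (Fin.append_left u v)

@[simp] theorem Fin.append_comp_natAdd {α : Type*} {m n : ℕ} (u : Fin m → α) (v : Fin n → α) :
    Fin.append u v ∘ Fin.natAdd m = v :=
  funext (Fin.append_right u v)

theorem Fintype.sum_fin_append {α β : Type*} [Fintype α] [AddCommMonoid β] {m n : ℕ}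
    (g : (Fin (m + n) → α) → β) :
    ∑ y, g y = ∑ y₁ : Fin m → α, ∑ y₂ : Fin n → α, g (Fin.append y₁ y₂) := by
  rw [← (Fin.appendEquiv m n).sum_comp, Fintype.sum_prod_type]
  rfl

theorem Finset.sum_sum_mul_sub_mul_sq {ι R : Type*} [Fintype ι] [CommRing R] (f g : ι → R) :
    ∑ i, ∑ j, (f i * g j - f j * g i) ^ 2
      = 2 * ((∑ i, f i ^ 2) * (∑ i, g i ^ 2) - (∑ i, f i * g i) ^ 2) := by
  set X : ι → ι → R := fun i j => f i ^ 2 * g j ^ 2 - f i * g i * (f j * g j)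
  have hX : ∑ i, ∑ j, X i j = (∑ i, f i ^ 2) * (∑ i, g i ^ 2) - (∑ i, f i * g i) ^ 2 := by
    simp only [X, Finset.sum_sub_distrib, Finset.sum_mul_sum, sq]
  calc ∑ i, ∑ j, (f i * g j - f j * g i) ^ 2 = ∑ i, ∑ j, (X i j + X j i) :=
        Finset.sum_congr rfl fun i _ => Finset.sum_congr rfl fun j _ => by simp only [X]; ring
    _ = 2 * ((∑ i, f i ^ 2) * (∑ i, g i ^ 2) - (∑ i, f i * g i) ^ 2) := by
        simp only [Finset.sum_add_distrib]
        rw [Finset.sum_comm (f := fun i j => X j i), ← hX, two_mul]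

theorem mul_eq_mul_of_sum_mul_sq_eq {ι R : Type*} [Fintype ι] [CommRing R] [LinearOrder R]
    [IsStrictOrderedRing R] {f g : ι → R}
    (h : (∑ i, f i * g i) ^ 2 = (∑ i, f i ^ 2) * ∑ i, g i ^ 2) (i j : ι) :
    f i * g j = f j * g i := by
  have hsq : ∑ i, ∑ j, (f i * g j - f j * g i) ^ 2 = 0 := by
    rw [Finset.sum_sum_mul_sub_mul_sq, h, sub_self, mul_zero]
  have hij := (Finset.sum_eq_zero_iff_of_nonneg fun _ _ => by positivity).1
    ((Finset.sum_eq_zero_iff_of_nonneg fun _ _ => by positivity).1 hsq i (Finset.mem_univ _))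
    j (Finset.mem_univ _)
  exact sub_eq_zero.1 (pow_eq_zero_iff two_ne_zero |>.1 hij)

theorem NNRat.mul_eq_mul_of_two_mixtures {u v p q u₀ q₀ : ℚ≥0}
    (h₁ : (u + v) * q₀ = u₀ * (p + q)) (h₂ : (u + 2 * v) * (2 * q₀) = u₀ * (p + 2 * q)) :
    u * q₀ = u₀ * q := by
  have h₁' : ((u + v) * q₀ : ℚ) = u₀ * (p + q) := by exact_mod_cast h₁
  have h₂' : ((u + 2 * v) * (2 * q₀) : ℚ) = u₀ * (p + 2 * q) := by exact_mod_cast h₂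
  -- `2 h₁ - h₂` reads `u₀ p + 2 v q₀ = 0`, a sum of nonnegative terms.
  have : (0 : ℚ) ≤ v * q₀ := by positivity
  have : (0 : ℚ) ≤ u₀ * p := by positivity
  exact_mod_cast (by linarith : (u * q₀ : ℚ) = u₀ * q)

section Matrix
variable {R C α : Type*}

def ProportionalAt [Mul α] (r s : C → α) (c : C) : Prop :=
  ∀ c', r c' * s c = r c * s c'

theorem ProportionalAt.trans [CommMonoidWithZero α] [IsCancelMulZero α] {r s t : C → α} {c : C}
    (hrs : ProportionalAt r s c) (hs : s c ≠ 0) (hst : ProportionalAt s t c) :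
    ProportionalAt r t c := fun c' =>
  mul_left_cancel₀ hs <| calc
    s c * (r c' * t c) = (r c' * s c) * t c := by ac_rfl
    _ = r c * (s c' * t c) := by rw [hrs c']; ac_rfl
    _ = s c * (r c * t c') := by rw [hst c']; ac_rfl

def RowsProportionalOnOverlap [MulZeroClass α] (M : R → C → α) : Prop :=
  ∀ r r' c, M r c ≠ 0 → M r' c ≠ 0 → ProportionalAt (M r) (M r') c

theorem RowsProportionalOnOverlap.comp [MulZeroClass α] {R' C' : Type*} {M : R → C → α}
    (h : RowsProportionalOnOverlap M) (f : R' → R) (g : C' → C) :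
    RowsProportionalOnOverlap (fun r c => M (f r) (g c)) :=
  fun r r' c hr hr' c' => h (f r) (f r') (g c) hr hr' (g c')

instance [Zero α] {M : R → C → α} : Std.Symm (MatAdj M) where
  symm p q := by cases p <;> cases q <;> exact id

-- Along a walk from row `r`, every row met has its support inside that of `r`.
theorem RowsProportionalOnOverlap.ne_zero_of_reflTransGen [MulZeroClass α] [NoZeroDivisors α]
    {M : R → C → α}
    (h : RowsProportionalOnOverlap M) {r : R} {c : C}
    (hrc : Relation.ReflTransGen (MatAdj M) (.inl r) (.inr c)) : M r c ≠ 0 := by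
  suffices ∀ p, Relation.ReflTransGen (MatAdj M) (.inl r) p →
      Sum.elim (fun r' => ∀ c, M r' c ≠ 0 → M r c ≠ 0) (fun c => M r c ≠ 0) p from
    this _ hrc
  intro p hp
  induction hp with
  | refl => exact fun _ => id
  | @tail p q _ hpq ih =>
    rcases p with r' | c <;> rcases q with r'' | c' <;> simp only [MatAdj] at hpq
    · exact ih c' hpq
    · intro c'' hc''
      exact left_ne_zero_of_mul (h r r'' c ih hpq c'' ▸ mul_ne_zero ih hc'')

theorem RowsProportionalOnOverlap.blockRank1 [CommGroupWithZero α] {M : R → C → α}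
    (h : RowsProportionalOnOverlap M) : BlockRank1 M := by
  rcases isEmpty_or_nonempty C with hC | hC
  · exact ⟨0, 0, fun _ c => isEmptyElim c⟩
  rcases isEmpty_or_nonempty R with hR | hR
  · exact ⟨0, 0, fun r => isEmptyElim r⟩
  set E := Relation.ReflTransGen (MatAdj M)
  -- `σ r` is a column of the block of `r`; it only depends on that block.
  let σ : R → C := fun r => Classical.epsilon fun c => E (.inl r) (.inr c)
  let τ : C → R := fun c => Classical.epsilon fun r => E (.inl r) (.inr c)
  refine ⟨fun r => M r (σ r), fun c => M (τ c) c / M (τ c) (σ (τ c)), fun r c hrc => ?_⟩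
  have hτ : E (.inl (τ c)) (.inr c) := Classical.epsilon_spec (p := fun r => E _ _) ⟨r, hrc⟩
  have hσ : σ (τ c) = σ r := by
    refine congrArg Classical.epsilon (funext fun c' => propext ?_)
    constructor <;> intro h' <;> refine Relation.ReflTransGen.trans ?_ h'
    exacts [hrc.trans (symm hτ), hτ.trans (symm hrc)]
  have hr : E (.inl r) (.inr (σ r)) := Classical.epsilon_spec (p := fun c => E _ _) ⟨c, hrc⟩
  have hτσ : E (.inl (τ c)) (.inr (σ r)) := hτ.trans ((symm hrc).trans hr)
  show M r c = M r (σ r) * (M (τ c) c / M (τ c) (σ (τ c)))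
  rw [hσ, mul_div_assoc', eq_div_iff (h.ne_zero_of_reflTransGen hτσ),
    h r (τ c) c (h.ne_zero_of_reflTransGen hrc) (h.ne_zero_of_reflTransGen hτ)]

-- Rows `(a, z)` and `(b, z')` are linked through `(a, z')` or `(b, z)`; when both of these vanish
-- on the shared column, the mixtures `N a + t • N b` for `t = 1, 2` separate the two rows.
theorem rowsProportionalOnOverlap_prod_of_mixtures {A Z Y : Type*} {N : A → Z → Y → ℚ≥0}
    (hslice : ∀ z, RowsProportionalOnOverlap (fun a y => N a z y))
    (hmix : ∀ a b (t : ℚ≥0), RowsProportionalOnOverlap (fun z y => N a z y + t * N b z y)) :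
    RowsProportionalOnOverlap (fun (p : A × Z) y => N p.1 p.2 y) := by
  rintro ⟨a, z⟩ ⟨b, z'⟩ c (h : N a z c ≠ 0) (h' : N b z' c ≠ 0)
  have hfix : ∀ a, RowsProportionalOnOverlap (fun z y => N a z y) := fun a => by
    simpa using hmix a a 0
  by_cases hp : N a z' c ≠ 0
  · exact (hfix a z z' c h hp).trans hp (hslice z' a b c hp h')
  by_cases hv : N b z c ≠ 0
  · exact (hslice z a b c h hv).trans hv (hfix b z z' c hv h')
  push Not at hp hv
  intro c'
  have hmix_at : ∀ t : ℚ≥0, t ≠ 0 →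
      (N a z c' + t * N b z c') * (t * N b z' c) = N a z c * (N a z' c' + t * N b z' c') := by
    intro t ht
    simpa [hp, hv] using hmix a b t z z' c (by simpa [hv] using h) (by simp [hp, ht, h']) c'
  exact NNRat.mul_eq_mul_of_two_mixtures (by simpa using hmix_at 1 one_ne_zero)
    (hmix_at 2 two_ne_zero)

end Matrix

section Atom
variable {D : Type}

/-- An atomic formula over the variables `Fin n`: a weight function with its scope. -/
abbrev Atom (D : Type) (n : ℕ) : Type := Σ w : WFun D, (Fin w.1 → Fin n)

def Atom.eval {n : ℕ} (a : Atom D n) (x : Fin n → D) : ℚ≥0 := a.1.2 (x ∘ a.2)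

def Atom.rename {n n' : ℕ} (σ : Fin n → Fin n') (a : Atom D n) : Atom D n' := ⟨a.1, σ ∘ a.2⟩

@[simp] theorem Atom.rename_fst {n n' : ℕ} (σ : Fin n → Fin n') (a : Atom D n) :
    (a.rename σ).1 = a.1 := rfl

@[simp] theorem Atom.eval_rename {n n' : ℕ} (σ : Fin n → Fin n') (a : Atom D n) (x : Fin n' → D) :
    (a.rename σ).eval x = a.eval (x ∘ σ) := rfl

end Atom

section Clone
variable {D : Type} [Fintype D] [DecidableEq D] {𝓕 : Set (WFun D)}

theorem inFClone_iff_atoms {n : ℕ} {F : (Fin n → D) → ℚ≥0} :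
    InFClone 𝓕 F ↔ ∃ (k m : ℕ) (A : Fin m → Atom D (n + k)),
      (∀ j, (A j).1 ∈ 𝓕 ∨ (A j).1 = ⟨2, EQw D⟩) ∧
      ∀ x, F x = ∑ y : Fin k → D, ∏ j, (A j).eval (Fin.append x y) := by
  constructor
  · rintro ⟨k, m, ar, G, sc, hG, hF⟩
    exact ⟨k, m, fun j => ⟨⟨ar j, G j⟩, sc j⟩, hG, hF⟩
  · rintro ⟨k, m, A, hA, hF⟩
    exact ⟨k, m, fun j => (A j).1.1, fun j => (A j).1.2, fun j => (A j).2, hA, hF⟩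

theorem inFClone_of_mem {n : ℕ} {F : (Fin n → D) → ℚ≥0} (hF : ⟨n, F⟩ ∈ 𝓕) : InFClone 𝓕 F :=
  inFClone_iff_atoms.2 ⟨0, 1, fun _ => ⟨⟨n, F⟩, Fin.castAdd 0⟩, fun _ => .inl hF, fun x => by
    simp only [Fintype.sum_unique, Fin.prod_univ_one, Atom.eval]
    exact congrArg F (funext fun i => (Fin.append_left x _ i).symm)⟩

namespace InFClone

theorem comp {n n' : ℕ} {F : (Fin n → D) → ℚ≥0} (hF : InFClone 𝓕 F) (σ : Fin n → Fin n') :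
    InFClone 𝓕 (fun x => F (x ∘ σ)) := by
  obtain ⟨k, m, A, hA, hF⟩ := inFClone_iff_atoms.1 hF
  refine inFClone_iff_atoms.2 ⟨k, m,
    fun j => (A j).rename (Fin.append (Fin.castAdd k ∘ σ) (Fin.natAdd n' ∘ id)), hA, fun x => ?_⟩
  simp only [hF, Atom.eval_rename, Fin.append_comp_append]
  rfl

theorem mul {n : ℕ} {F G : (Fin n → D) → ℚ≥0} (hF : InFClone 𝓕 F) (hG : InFClone 𝓕 G) :
    InFClone 𝓕 (fun x => F x * G x) := by
  obtain ⟨k₁, m₁, A₁, hA₁, hF⟩ := inFClone_iff_atoms.1 hF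
  obtain ⟨k₂, m₂, A₂, hA₂, hG⟩ := inFClone_iff_atoms.1 hG
  refine inFClone_iff_atoms.2 ⟨k₁ + k₂, m₁ + m₂, Fin.append
    (fun j => (A₁ j).rename (Fin.append (Fin.castAdd _ ∘ id) (Fin.natAdd n ∘ Fin.castAdd k₂)))
    (fun j => (A₂ j).rename (Fin.append (Fin.castAdd _ ∘ id) (Fin.natAdd n ∘ Fin.natAdd k₁))),
    Fin.addCases (fun j => by simpa using hA₁ j) (fun j => by simpa using hA₂ j),
    fun x => ?_⟩
  rw [hF, hG, Finset.sum_mul_sum, Fintype.sum_fin_append]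
  refine Finset.sum_congr rfl fun y₁ _ => Finset.sum_congr rfl fun y₂ _ => ?_
  simp only [Fin.prod_univ_add, Fin.append_left, Fin.append_right, Atom.eval_rename]
  rw [Fin.append_comp_append, Fin.append_comp_append]
  simp only [Fin.append_comp_castAdd, Fin.append_comp_natAdd, Function.comp_id]

theorem sum_append {n p : ℕ} {F : (Fin (n + p) → D) → ℚ≥0} (hF : InFClone 𝓕 F) :
    InFClone 𝓕 (fun x : Fin n → D => ∑ w : Fin p → D, F (Fin.append x w)) := by
  obtain ⟨k, m, A, hA, hF⟩ := inFClone_iff_atoms.1 hF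
  refine inFClone_iff_atoms.2 ⟨p + k, m,
    fun j => (A j).rename (Fin.cast (Nat.add_assoc n p k)), hA, fun x => ?_⟩
  simp only [hF, Fintype.sum_fin_append (m := p), Atom.eval_rename, ← Fin.append_assoc]

end InFClone
end Clone

section Language
variable {D : Type} [Fintype D] [DecidableEq D] {𝓕 : Set (WFun D)}

namespace InFClone

theorem exists_gram {l : ℕ} {F : (Fin (1 + l) → D) → ℚ≥0} (hF : InFClone 𝓕 F) :
    ∃ G : (Fin 2 → D) → ℚ≥0, InFClone 𝓕 G ∧
      ∀ x x' : Fin 1 → D, G ![x 0, x' 0] = ∑ y, F (Fin.append x y) * F (Fin.append x' y) := by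
  let σ : Fin 2 → Fin (1 + l) → Fin (2 + l) := fun i =>
    Fin.append (Fin.castAdd l ∘ fun _ => i) (Fin.natAdd 2 ∘ id)
  refine ⟨_, ((hF.comp (σ 0)).mul (hF.comp (σ 1))).sum_append, fun x x' => ?_⟩
  have hrow : ∀ x : Fin 1 → D, (fun _ : Fin 1 => x 0) = x := fun x =>
    funext fun i => by rw [Subsingleton.elim i 0]
  simp only [σ, Fin.append_comp_append]
  simp [Function.comp_def, hrow]

theorem exists_sum_mul_cons (hcons : ∀ u : D → ℚ≥0, (⟨1, fun x => u (x 0)⟩ : WFun D) ∈ 𝓕)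
    {k l : ℕ} {F : (Fin ((k + 1) + l) → D) → ℚ≥0} (hF : InFClone 𝓕 F) (u : D → ℚ≥0) :
    ∃ G : (Fin (k + l) → D) → ℚ≥0, InFClone 𝓕 G ∧
      ∀ z y, G (Fin.append z y) = ∑ a, u a * F (Fin.append (Fin.cons a z) y) := by
  let ρ : Fin ((k + 1) + l) → Fin ((k + l) + 1) :=
    Fin.append (Fin.cons (Fin.natAdd (k + l) 0) (Fin.castAdd 1 ∘ Fin.castAdd l))
      (Fin.castAdd 1 ∘ Fin.natAdd k)
  have hρ : ∀ z y (w : Fin 1 → D),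
      Fin.append (Fin.append z y) w ∘ ρ = Fin.append (Fin.cons (w 0) z) y := by
    intro z y w
    funext i
    refine Fin.addCases (fun i => ?_) (fun i => ?_) i
    · refine Fin.cases ?_ (fun i => ?_) i <;> simp [ρ]
    · simp [ρ]
  refine ⟨_, (((inFClone_of_mem (hcons u)).comp fun _ => Fin.natAdd (k + l) 0).mul
    (hF.comp ρ)).sum_append, fun z y => ?_⟩
  simp only [hρ]
  exact Fintype.sum_equiv (Equiv.funUnique (Fin 1) D) _ _ fun w => by simp

end InFClone

theorem rowsProportionalOnOverlap_of_inFClone_one (hwlm : WeaklyLogModular 𝓕) {l : ℕ}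
    {F : (Fin (1 + l) → D) → ℚ≥0} (hF : InFClone 𝓕 F) :
    RowsProportionalOnOverlap (fun (x : Fin 1 → D) (y : Fin l → D) => F (Fin.append x y)) := by
  obtain ⟨G, hG, hGram⟩ := hF.exists_gram
  intro x x' c hx hx' c'
  rcases hwlm G hG (x 0) (x' 0) with h | ⟨h, -⟩ | ⟨h, -⟩ <;>
    simp only [hGram] at h
  · have hq : ((∑ y, F (Fin.append x y) * F (Fin.append x y)) *
        ∑ y, F (Fin.append x' y) * F (Fin.append x' y) : ℚ) =
        (∑ y, F (Fin.append x y) * F (Fin.append x' y)) *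
        ∑ y, F (Fin.append x' y) * F (Fin.append x y) := by exact_mod_cast h
    push_cast at hq
    have := mul_eq_mul_of_sum_mul_sq_eq (f := fun y => (F (Fin.append x y) : ℚ))
      (g := fun y => (F (Fin.append x' y) : ℚ))
      (by simp only [sq, hq, mul_comm (F (Fin.append x' _) : ℚ)]) c' c
    exact_mod_cast this
  · exact absurd (Finset.sum_eq_zero_iff.1 h c (Finset.mem_univ _)) (mul_ne_zero hx hx)
  · exact absurd (Finset.sum_eq_zero_iff.1 h c (Finset.mem_univ _)) (mul_ne_zero hx hx')

theorem InFClone.rowsProportionalOnOverlap_cons (hwlm : WeaklyLogModular 𝓕) {k l : ℕ}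
    {F : (Fin ((k + 1) + l) → D) → ℚ≥0} (hF : InFClone 𝓕 F) (z : Fin k → D) :
    RowsProportionalOnOverlap
      (fun (a : D) (y : Fin l → D) => F (Fin.append (Fin.cons a z) y)) := by
  have h : (k + 1) + l = 1 + (k + l) := by omega
  have hcast : ∀ a (y : Fin l → D),
      Fin.append ![a] (Fin.append z y) ∘ Fin.cast h = Fin.append (Fin.cons a z) y := by
    intro a y
    funext i
    simp [Fin.append_cons, Fin.append_left_eq_cons]
  simpa only [hcast] using (rowsProportionalOnOverlap_of_inFClone_one hwlm
    (hF.comp (Fin.cast h))).comp (fun a => ![a]) (Fin.append z)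

theorem rowsProportionalOnOverlap_of_inFClone
    (hcons : ∀ u : D → ℚ≥0, (⟨1, fun x => u (x 0)⟩ : WFun D) ∈ 𝓕) (hwlm : WeaklyLogModular 𝓕) :
    ∀ {k l : ℕ} {F : (Fin ((k + 1) + l) → D) → ℚ≥0}, InFClone 𝓕 F →
      RowsProportionalOnOverlap (fun (x : Fin (k + 1) → D) (y : Fin l → D) => F (Fin.append x y))
  | 0, _, _, hF => rowsProportionalOnOverlap_of_inFClone_one hwlm hF
  | k + 1, l, F, hF => by
    have hN := rowsProportionalOnOverlap_prod_of_mixtures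
      (N := fun a z y => F (Fin.append (Fin.cons a z) y))
      (hF.rowsProportionalOnOverlap_cons hwlm) fun a b t => by
        obtain ⟨G, hG, hGeq⟩ := hF.exists_sum_mul_cons hcons
          fun c => (if c = a then 1 else 0) + t * if c = b then 1 else 0
        simpa [hGeq, add_mul, Finset.sum_add_distrib, mul_assoc, ← Finset.mul_sum] using
          rowsProportionalOnOverlap_of_inFClone hcons hwlm hG
    simpa only [Fin.cons_self_tail, id] using
      hN.comp (fun x : Fin (k + 2) → D => (x 0, Fin.tail x)) id

end Language

theorem conservative_weaklyLogModular_balanced_general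
    {D : Type} [Fintype D] [DecidableEq D]
    (𝓕 : Set (WFun D))
    (hcons : ∀ u : D → ℚ≥0, (⟨1, fun x => u (x 0)⟩ : WFun D) ∈ 𝓕)
    (hwlm : WeaklyLogModular 𝓕) :
    BalancedLang 𝓕 := by
  intro k l hk _ F hF
  obtain ⟨k, rfl⟩ : ∃ k', k = k' + 1 := ⟨k - 1, by omega⟩
  exact (rowsProportionalOnOverlap_of_inFClone hcons hwlm hF).blockRank1

/-- Every conservative, weakly log-modular weighted constraint language is balanced. -/
theorem conservative_weaklyLogModular_balanced
    {D : Type} [Fintype D] [DecidableEq D] (hD : 2 ≤ Fintype.card D)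
    (𝓕 : Set (WFun D))
    (hcons : ∀ u : D → ℚ≥0, (⟨1, fun x => u (x 0)⟩ : WFun D) ∈ 𝓕)
    (hwlm : WeaklyLogModular 𝓕) :
    BalancedLang 𝓕 :=
  conservative_weaklyLogModular_balanced_general 𝓕 hcons hwlm
end

section
/- Let Φ be a valued constraint language over a finite domain D, let I be a VCSP instance over Φ with constraint multiset T and n variables, and let t ∈ T. For each N ∈ ℕ let I_N be the instance obtained from I by adding N further copies of the valued constraint t. Suppose ⟨⊓,⊔⟩ is a pair of families of binary operations (one pair ⟨⊓ᵢ,⊔ᵢ⟩ for each variable index i ∈ {1,…,n}) which is a multisorted multimorphism of f_{I_N} for every N ∈ ℕ. Then the restriction ⟨⊓[σ_t],⊔[σ_t]⟩ of these families to the coordinates in the scope σ_t is a multisorted multimorphism of f'_t = f_t + R_{I,t}. -/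
/-!
Write `F = f_I`, and let `a`, `b` be the restrictions to `σ_t` of assignments `x`, `y` with
`F x, F y < ∞`. The multimorphism inequality of `f_{I_N}` at `x`, `y` reads
`F(x ⊓ y) + N f_t(a ⊓ b) + F(x ⊔ y) + N f_t(a ⊔ b) ≤ F x + F y + N (f_t a + f_t b)`.
For `N = 0` it makes `x ⊓ y` and `x ⊔ y` feasible, so `R_{I,t}` vanishes at `a ⊓ b` and `a ⊔ b`;
dividing by `N` and letting `N → ∞` gives `f_t(a ⊓ b) + f_t(a ⊔ b) ≤ f_t a + f_t b`.
-/

open scoped ENNReal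

/-- The feasibility domain of coordinate `i` of a cost function `g`:
the set of values taken at `i` by some point where `g` is finite. -/
def feasSet {D : Type} {k : ℕ} (g : (Fin k → D) → ℝ≥0∞) (i : Fin k) : Set D :=
  {a | ∃ x : Fin k → D, x i = a ∧ g x ≠ ⊤}

/-- `⟨inf, sup⟩` is a multisorted multimorphism of the cost function `g`:
for each coordinate `i`, the pair `⟨infᵢ, supᵢ⟩` is conservative and commutative
on the feasibility domain `Dᵢ` of `g`, and applying them componentwise we have
`g(x ⊓ y) + g(x ⊔ y) ≤ g(x) + g(y)` on `D₁ × ⋯ × D_k`. -/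
def IsMultisortedMM {D : Type} {k : ℕ} (g : (Fin k → D) → ℝ≥0∞)
    (inf sup : Fin k → D → D → D) : Prop :=
  (∀ i : Fin k, ∀ a ∈ feasSet g i, ∀ b ∈ feasSet g i,
      ({inf i a b, sup i a b} : Multiset D) = {a, b} ∧
      inf i a b = inf i b a ∧ sup i a b = sup i b a) ∧
  ∀ x y : Fin k → D, (∀ i, x i ∈ feasSet g i) → (∀ i, y i ∈ feasSet g i) →
    g (fun i => inf i (x i) (y i)) + g (fun i => sup i (x i) (y i)) ≤ g x + g y

theorem ENNReal.le_of_forall_nat_mul_le_add {u p C : ℝ≥0∞} (hC : C ≠ ⊤)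
    (h : ∀ N : ℕ, (N : ℝ≥0∞) * u ≤ C + N * p) : u ≤ p := by
  by_contra! hpu
  obtain ⟨N, hN⟩ := ENNReal.exists_nat_mul_gt (tsub_pos_of_lt hpu).ne' hC
  refine (h N).not_gt ?_
  calc C + N * p < N * (u - p) + N * p :=
        ENNReal.add_lt_add_right (ENNReal.mul_ne_top (ENNReal.natCast_ne_top N) hpu.ne_top) hN
    _ = N * u := by rw [← mul_add, tsub_add_cancel_of_le hpu.le]

section Restriction

variable {D : Type} {n k : ℕ}

open Classical in
/-- The hard constraint `R_{I,t}` for `f_I = F` and the scope `σ_t = s`. -/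
noncomputable def extensionIndicator (F : (Fin n → D) → ℝ≥0∞) (s : Fin k → Fin n)
    (a : Fin k → D) : ℝ≥0∞ :=
  if ∃ x : Fin n → D, (∀ i, x (s i) = a i) ∧ F x ≠ ⊤ then 0 else ⊤

variable {F : (Fin n → D) → ℝ≥0∞} {h : (Fin k → D) → ℝ≥0∞} {s : Fin k → Fin n}

theorem extensionIndicator_ne_top_iff {a : Fin k → D} :
    extensionIndicator F s a ≠ ⊤ ↔ ∃ x : Fin n → D, (∀ i, x (s i) = a i) ∧ F x ≠ ⊤ := by
  unfold extensionIndicator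
  split_ifs with hx <;> simp [hx]

theorem extensionIndicator_eq_zero {x : Fin n → D} {a : Fin k → D} (hx : F x ≠ ⊤)
    (hxa : ∀ i, x (s i) = a i) : extensionIndicator F s a = 0 :=
  if_pos ⟨x, hxa, hx⟩

theorem feasSet_add_nat_mul (hle : ∀ x, h (fun i => x (s i)) ≤ F x) (N : ℕ) (j : Fin n) :
    feasSet (fun x => F x + N * h (fun i => x (s i))) j = feasSet F j := by
  ext a
  refine exists_congr fun x => and_congr_right fun _ => ?_
  refine ⟨fun hx => ne_top_of_le_ne_top hx le_self_add, fun hx => ?_⟩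
  exact ENNReal.add_ne_top.mpr
    ⟨hx, ENNReal.mul_ne_top (ENNReal.natCast_ne_top N) (ne_top_of_le_ne_top hx (hle x))⟩

theorem feasSet_add_extensionIndicator_subset (i : Fin k) :
    feasSet (fun a => h a + extensionIndicator F s a) i ⊆ feasSet F (s i) := by
  rintro c ⟨a, rfl, ha⟩
  obtain ⟨x, hxa, hx⟩ := extensionIndicator_ne_top_iff.mp (ENNReal.add_ne_top.mp ha).2
  exact ⟨x, hxa i, hx⟩

variable {inf sup : Fin n → D → D → D}

theorem add_extensionIndicator_inf_add_sup_le (hle : ∀ x, h (fun i => x (s i)) ≤ F x)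
    (hmm : ∀ N : ℕ, IsMultisortedMM (fun x => F x + N * h (fun i => x (s i))) inf sup)
    {x y : Fin n → D} {a b : Fin k → D} (hx : F x ≠ ⊤) (hy : F y ≠ ⊤)
    (hxa : ∀ i, x (s i) = a i) (hyb : ∀ i, y (s i) = b i) :
    h (fun i => inf (s i) (a i) (b i)) + extensionIndicator F s (fun i => inf (s i) (a i) (b i)) +
        (h (fun i => sup (s i) (a i) (b i)) +
          extensionIndicator F s (fun i => sup (s i) (a i) (b i))) ≤
      h a + extensionIndicator F s a + (h b + extensionIndicator F s b) := by
  set xi : Fin n → D := fun j => inf j (x j) (y j)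
  set xs : Fin n → D := fun j => sup j (x j) (y j)
  have hinf (i : Fin k) : xi (s i) = inf (s i) (a i) (b i) := by simp only [xi, hxa, hyb]
  have hsup (i : Fin k) : xs (s i) = sup (s i) (a i) (b i) := by simp only [xs, hxa, hyb]
  have hkey (N : ℕ) : F xi + N * h (fun i => inf (s i) (a i) (b i)) +
      (F xs + N * h (fun i => sup (s i) (a i) (b i))) ≤ F x + N * h a + (F y + N * h b) := by
    have hfeas (z : Fin n → D) (hz : F z ≠ ⊤) (j : Fin n) :
        z j ∈ feasSet (fun x => F x + N * h (fun i => x (s i))) j := by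
      rw [feasSet_add_nat_mul hle]
      exact ⟨z, rfl, hz⟩
    simpa only [hxa, hyb] using (hmm N).2 x y (hfeas x hx) (hfeas y hy)
  have hfin : F xi + F xs ≠ ⊤ :=
    ne_top_of_le_ne_top (ENNReal.add_ne_top.mpr ⟨hx, hy⟩) (by simpa using hkey 0)
  obtain ⟨hxi, hxs⟩ := ENNReal.add_ne_top.mp hfin
  simp only [extensionIndicator_eq_zero hx hxa, extensionIndicator_eq_zero hy hyb,
    extensionIndicator_eq_zero hxi hinf, extensionIndicator_eq_zero hxs hsup, add_zero]
  refine ENNReal.le_of_forall_nat_mul_le_add (ENNReal.add_ne_top.mpr ⟨hx, hy⟩) fun N => ?_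
  calc (N : ℝ≥0∞) * (h (fun i => inf (s i) (a i) (b i)) + h (fun i => sup (s i) (a i) (b i)))
      ≤ F xi + N * h (fun i => inf (s i) (a i) (b i)) +
          (F xs + N * h (fun i => sup (s i) (a i) (b i))) := by
        rw [mul_add]; gcongr <;> exact le_add_self
    _ ≤ F x + N * h a + (F y + N * h b) := hkey N
    _ = F x + F y + N * (h a + h b) := by ring

theorem IsMultisortedMM.restrict_of_forall_add_nat_mul (hle : ∀ x, h (fun i => x (s i)) ≤ F x)
    (hmm : ∀ N : ℕ, IsMultisortedMM (fun x => F x + N * h (fun i => x (s i))) inf sup) :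
    IsMultisortedMM (fun a => h a + extensionIndicator F s a)
      (fun i => inf (s i)) (fun i => sup (s i)) := by
  have hfeas (i : Fin k) := (feasSet_add_nat_mul hle 0 (s i)).symm ▸
    feasSet_add_extensionIndicator_subset (h := h) i
  refine ⟨fun i a ha b hb => (hmm 0).1 (s i) a (hfeas i ha) b (hfeas i hb), fun a b ha hb => ?_⟩
  by_cases hA : h a + extensionIndicator F s a = ⊤
  · simp [hA]
  by_cases hB : h b + extensionIndicator F s b = ⊤
  · simp [hB]
  obtain ⟨x, hxa, hx⟩ := extensionIndicator_ne_top_iff.mp (ENNReal.add_ne_top.mp hA).2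
  obtain ⟨y, hyb, hy⟩ := extensionIndicator_ne_top_iff.mp (ENNReal.add_ne_top.mp hB).2
  exact add_extensionIndicator_inf_add_sup_le hle hmm hx hy hxa hyb

end Restriction

theorem multisorted_of_all_copies_general
    {D : Type} [Fintype D] [DecidableEq D]
    (n m : ℕ) (ar : Fin m → ℕ)
    (f : ∀ t : Fin m, (Fin (ar t) → D) → ℝ≥0∞)
    (sc : ∀ t : Fin m, Fin (ar t) → Fin n) (t₀ : Fin m)
    (inf sup : Fin n → D → D → D)
    (hmm : ∀ N : ℕ, IsMultisortedMM
      (fun x : Fin n → D =>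
        (∑ t : Fin m, f t (fun i => x (sc t i))) + N * f t₀ (fun i => x (sc t₀ i)))
      inf sup) :
    IsMultisortedMM
      (fun a : Fin (ar t₀) → D =>
        f t₀ a +
          if ∃ x : Fin n → D, (∀ i, x (sc t₀ i) = a i) ∧
              (∑ t : Fin m, f t (fun i => x (sc t i))) ≠ ⊤
          then 0 else ⊤)
      (fun i => inf (sc t₀ i)) (fun i => sup (sc t₀ i)) := by
  -- the frozen `if` is decided through the `Fintype` instances, `extensionIndicator` classically
  convert IsMultisortedMM.restrict_of_forall_add_nat_mul
    (fun x => Finset.single_le_sum (f := fun t => f t (fun i => x (sc t i)))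
      (fun _ _ => zero_le) (Finset.mem_univ t₀)) hmm
  unfold extensionIndicator
  congr

open Classical in
/-- Let `I` be a VCSP instance with constraints
`t = 0, …, m-1`, cost functions `f t` and scopes `sc t`, over `n` variables, and
let `t₀` be a constraint of `I`.  For `N ∈ ℕ`, `I_N` is `I` with `N` extra
copies of `t₀`.  If `⟨inf, sup⟩` (one pair of binary operations per variable)
is a multisorted multimorphism of `f_{I_N}` for every `N`, then its restriction
to the scope of `t₀` is a multisorted multimorphism of
`f'_{t₀} = f_{t₀} + R_{I,t₀}`. -/
theorem multisorted_of_all_copies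
    {D : Type} [Fintype D] [DecidableEq D] (hD : 2 ≤ Fintype.card D)
    (n m : ℕ) (ar : Fin m → ℕ)
    (f : ∀ t : Fin m, (Fin (ar t) → D) → ℝ≥0∞)
    (sc : ∀ t : Fin m, Fin (ar t) → Fin n) (t₀ : Fin m)
    (inf sup : Fin n → D → D → D)
    (hmm : ∀ N : ℕ, IsMultisortedMM
      (fun x : Fin n → D =>
        (∑ t : Fin m, f t (fun i => x (sc t i))) + N * f t₀ (fun i => x (sc t₀ i)))
      inf sup) :
    IsMultisortedMM
      (fun a : Fin (ar t₀) → D =>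
        f t₀ a +
          if ∃ x : Fin n → D, (∀ i, x (sc t₀ i) = a i) ∧
              (∑ t : Fin m, f t (fun i => x (sc t i))) ≠ ⊤
          then 0 else ⊤)
      (fun i => inf (sc t₀ i)) (fun i => sup (sc t₀ i)) :=
  multisorted_of_all_copies_general n m ar f sc t₀ inf sup hmm
end

section
/- Let D₁,…,D_k be finite non-empty totally ordered sets and let f : D₁×⋯×D_k → ℝ̄≥0 satisfy f(x ∧ y) + f(x ∨ y) ≤ f(x) + f(y) for all x,y ∈ D₁×⋯×D_k, where ∧ and ∨ are componentwise minimum and maximum. For each i let Dᵢ⁺ = Dᵢ ∪ {⊥ᵢ} with a new least element ⊥ᵢ, and for a ∈ Dᵢ⁺ let U_{i,a} = {b ∈ Dᵢ⁺ : b < a}. Let V be the disjoint union of the sets Dᵢ⁺, and define f'' : 2^V → ℝ̄≥0 by f''(A) = f(a₁,…,a_k) if A = U_{1,a₁} ∪ ⋯ ∪ U_{k,a_k} for some (a₁,…,a_k) ∈ D₁×⋯×D_k, and f''(A) = ∞ otherwise. Then f'' is submodular: f''(A ∩ B) + f''(A ∪ B) ≤ f''(A) + f''(B) for all A, B ⊆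 V. -/
open scoped ENNReal

/-!
The encoding `a ↦ ⋃ᵢ U_{i,aᵢ}` (`sigmaIio`) preserves binary meets and joins, because
`b < min x y ↔ b < x ∧ b < y` and `b < max x y ↔ b < x ∨ b < y` in a linear order. Hence on
pairs of encoded sets submodularity of `f''` is that of `f`, and if `A` or `B` is not encoded the
right-hand side is `∞`.
-/

theorem submodular_of_comp_latticeHom_of_top_off_range {β γ : Type*} [Lattice β] [Lattice γ]
    (e : LatticeHom β γ)
    {f : β → ℝ≥0∞} (hf : ∀ x y, f (x ⊓ y) + f (x ⊔ y) ≤ f x + f y)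
    {g : γ → ℝ≥0∞} (hg : ∀ x, g (e x) = f x) (hg_top : ∀ z, z ∉ Set.range e → g z = ⊤)
    (z w : γ) : g (z ⊓ w) + g (z ⊔ w) ≤ g z + g w := by
  by_cases hz : z ∈ Set.range e
  · by_cases hw : w ∈ Set.range e
    · obtain ⟨x, rfl⟩ := hz
      obtain ⟨y, rfl⟩ := hw
      rw [← map_inf, ← map_sup, hg, hg, hg, hg]
      exact hf x y
    · simp [hg_top w hw]
  · simp [hg_top z hz]

section SigmaIio

variable {ι : Type*} {α : ι → Type*} [∀ i, LinearOrder (α i)]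

def sigmaIio (a : ∀ i, α i) : Set (Σ i, WithBot (α i)) :=
  {v | v.2 < (a v.1 : WithBot (α v.1))}

theorem sigmaIio_inf (a b : ∀ i, α i) : sigmaIio (a ⊓ b) = sigmaIio a ∩ sigmaIio b := by
  ext v
  simp [sigmaIio, WithBot.coe_inf]

theorem sigmaIio_sup (a b : ∀ i, α i) : sigmaIio (a ⊔ b) = sigmaIio a ∪ sigmaIio b := by
  ext v
  simp [sigmaIio, WithBot.coe_sup]

def sigmaIioLatticeHom : LatticeHom (∀ i, α i) (Set (Σ i, WithBot (α i))) where
  toFun := sigmaIio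
  map_sup' := sigmaIio_sup
  map_inf' := sigmaIio_inf

end SigmaIio

theorem submodular_of_encoded_general
    (k : ℕ) (Dd : Fin k → Type)
    [∀ i, LinearOrder (Dd i)]
    (f : (∀ i, Dd i) → ℝ≥0∞)
    (hsub : ∀ x y : ∀ i, Dd i, f (x ⊓ y) + f (x ⊔ y) ≤ f x + f y)
    (f'' : Set ((i : Fin k) × WithBot (Dd i)) → ℝ≥0∞)
    (henc : ∀ a : ∀ i, Dd i,
      f'' {v : (i : Fin k) × WithBot (Dd i) | v.2 < (a v.1 : WithBot (Dd v.1))} = f a)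
    (hother : ∀ A : Set ((i : Fin k) × WithBot (Dd i)),
      (¬ ∃ a : ∀ i, Dd i,
        A = {v : (i : Fin k) × WithBot (Dd i) | v.2 < (a v.1 : WithBot (Dd v.1))}) →
      f'' A = ⊤) :
    ∀ A B : Set ((i : Fin k) × WithBot (Dd i)),
      f'' (A ∩ B) + f'' (A ∪ B) ≤ f'' A + f'' B := by
  refine submodular_of_comp_latticeHom_of_top_off_range sigmaIioLatticeHom hsub henc fun A hA => hother A ?_
  rintro ⟨a, rfl⟩
  exact hA ⟨a, rfl⟩

/-- Let `f` be a submodular function on a product of finite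
non-empty totally ordered sets `D₁ × ⋯ × D_k` with values in `ℝ≥0 ∪ {∞}`.
Adjoin a new least element `⊥ᵢ` to each `Dᵢ` (via `WithBot`), let `V` be the
disjoint union of the `Dᵢ⁺`, and encode `(a₁, …, a_k)` as the set
`U_{1,a₁} ∪ ⋯ ∪ U_{k,a_k} ⊆ V` where `U_{i,a} = {b ∈ Dᵢ⁺ : b < a}`.  Then any
`f'' : 2^V → ℝ≥0∞` agreeing with `f` on encoded tuples and equal to `∞`
elsewhere is submodular. -/
theorem submodular_of_encoded
    (k : ℕ) (Dd : Fin k → Type)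
    [∀ i, Fintype (Dd i)] [∀ i, Nonempty (Dd i)] [∀ i, LinearOrder (Dd i)]
    (f : (∀ i, Dd i) → ℝ≥0∞)
    (hsub : ∀ x y : ∀ i, Dd i, f (x ⊓ y) + f (x ⊔ y) ≤ f x + f y)
    (f'' : Set ((i : Fin k) × WithBot (Dd i)) → ℝ≥0∞)
    (henc : ∀ a : ∀ i, Dd i,
      f'' {v : (i : Fin k) × WithBot (Dd i) | v.2 < (a v.1 : WithBot (Dd v.1))} = f a)
    (hother : ∀ A : Set ((i : Fin k) × WithBot (Dd i)),
      (¬ ∃ a : ∀ i, Dd i,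
        A = {v : (i : Fin k) × WithBot (Dd i) | v.2 < (a v.1 : WithBot (Dd v.1))}) →
      f'' A = ⊤) :
    ∀ A B : Set ((i : Fin k) × WithBot (Dd i)),
      f'' (A ∩ B) + f'' (A ∪ B) ≤ f'' A + f'' B :=
  submodular_of_encoded_general k Dd f hsub f'' henc hother
end

section
/- A real matrix M with row set R and column set C has block-rank 1 if and only if, for every u,u' ∈ R and v,v' ∈ C, the 2×2 matrix N with entries N₁₁ = M(u,v), N₁₂ = M(u,v'), N₂₁ = M(u',v), N₂₂ = M(u',v') has block-rank 1. -/
/-! Block-rank 1 passes to submatrices, since a path in the graph of a submatrix is a path in the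
graph of `M`. Conversely, block-rank 1 of the `2 × 2` submatrices means that any three non-zero
entries `M u v`, `M u v'`, `M u' v` force `M u' v' ≠ 0` and a vanishing determinant. Hence every
entry inside a block is non-zero, and, fixing an entry `M r₀ c₀` of a block, the vanishing
determinants give `M r c = M r c₀ * (M r₀ c / M r₀ c₀)` throughout the block. -/

open Relation

section BlockRank1

variable {R C α : Type*}

instance MatAdj.instSymm [Zero α] (M : R → C → α) : Std.Symm (MatAdj M) where
  symm x y h := by cases x <;> cases y <;> exact h

def matAdjSetoid [Zero α] (M : R → C → α) : Setoid (R ⊕ C) where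
  r := ReflTransGen (MatAdj M)
  iseqv := ⟨fun _ => .refl, fun h => symm h, .trans⟩

def HasRankOneRectangles [Zero α] [Mul α] (M : R → C → α) : Prop :=
  ∀ u u' v v', M u v ≠ 0 → M u v' ≠ 0 → M u' v ≠ 0 →
    M u' v' ≠ 0 ∧ M u v * M u' v' = M u v' * M u' v

theorem BlockRank1.submatrix {R' C' : Type*} [Zero α] [Mul α] {M : R → C → α}
    (hM : BlockRank1 M) (f : R' → R) (g : C' → C) :
    BlockRank1 (fun i j => M (f i) (g j)) := by
  obtain ⟨a, b, hab⟩ := hM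
  refine ⟨a ∘ f, b ∘ g, fun i j hij => hab _ _ ?_⟩
  refine ReflTransGen.lift (Sum.map f g) ?_ _ _ hij
  rintro (i | j) (i' | j') h <;> exact h

theorem BlockRank1.hasRankOneRectangles [CommMonoidWithZero α] [NoZeroDivisors α]
    {M : R → C → α} (hM : BlockRank1 M) : HasRankOneRectangles M := by
  intro u u' v v' huv huv' hu'v
  obtain ⟨a, b, hab⟩ := hM
  have e_uv : MatAdj M (.inl u) (.inr v) := huv
  have e_uv' : MatAdj M (.inl u) (.inr v') := huv'
  have e_u'v : MatAdj M (.inl u') (.inr v) := hu'v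
  have h_uv := hab u v (.single e_uv)
  have h_uv' := hab u v' (.single e_uv')
  have h_u'v := hab u' v (.single e_u'v)
  have h_u'v' := hab u' v' ((ReflTransGen.single e_u'v).tail (symm e_uv) |>.tail e_uv')
  rw [h_u'v] at hu'v
  rw [h_uv'] at huv'
  rw [h_uv, h_uv', h_u'v, h_u'v']
  exact ⟨mul_ne_zero (left_ne_zero_of_mul hu'v) (right_ne_zero_of_mul huv'),
    by ac_rfl⟩

theorem ne_zero_of_reflTransGen_matAdj [Zero α] {M : R → C → α}
    (hM : ∀ u u' v v', M u v ≠ 0 → M u v' ≠ 0 → M u' v ≠ 0 → M u' v' ≠ 0) {r : R} {c : C}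
    (h : ReflTransGen (MatAdj M) (.inl r) (.inr c)) : M r c ≠ 0 := by
  -- Along a path from `r`, every row reached has its support inside that of `r`.
  suffices ∀ y, ReflTransGen (MatAdj M) (.inl r) y →
      Sum.elim (fun r' => ∀ c, M r' c ≠ 0 → M r c ≠ 0) (fun c => M r c ≠ 0) y from
    this _ h
  intro y hy
  induction hy with
  | refl => exact fun _ h => h
  | @tail y z _ hyz ih =>
    rcases y with r' | c' <;> rcases z with r'' | c'' <;> simp only [MatAdj] at hyz
    · exact ih c'' hyz
    · exact fun c hc => hM r'' r c' c hyz hc ih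

theorem BlockRank1.of_forall_component [Zero α] [Mul α] {M : R → C → α}
    (h : ∀ x, ∃ (a : R → α) (b : C → α), ∀ r c, ReflTransGen (MatAdj M) x (.inl r) →
      ReflTransGen (MatAdj M) x (.inr c) → M r c = a r * b c) :
    BlockRank1 M := by
  let s := matAdjSetoid M
  choose a b hab using fun q : Quotient s => h q.out
  refine ⟨fun r => a ⟦.inl r⟧ r, fun c => b ⟦.inr c⟧ c, fun r c hrc => ?_⟩
  have hcomp : (⟦.inr c⟧ : Quotient s) = ⟦.inl r⟧ := Quotient.sound (symm hrc)
  dsimp only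
  rw [hcomp]
  exact hab _ r c (Quotient.mk_out (s := s) _) ((Quotient.mk_out (s := s) _).trans hrc)

theorem exists_factorization_on_component [Field α] {M : R → C → α}
    (hM : HasRankOneRectangles M) (x : R ⊕ C) :
    ∃ (a : R → α) (b : C → α), ∀ r c, ReflTransGen (MatAdj M) x (.inl r) →
      ReflTransGen (MatAdj M) x (.inr c) → M r c = a r * b c := by
  by_cases hx : ∃ r₀ c₀, ReflTransGen (MatAdj M) x (.inl r₀) ∧ ReflTransGen (MatAdj M) x (.inr c₀)
  · obtain ⟨r₀, c₀, hr₀, hc₀⟩ := hx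
    have hne : ∀ r c, ReflTransGen (MatAdj M) x (.inl r) →
        ReflTransGen (MatAdj M) x (.inr c) → M r c ≠ 0 := fun r c hr hc =>
      ne_zero_of_reflTransGen_matAdj (fun u u' v v' h₁ h₂ h₃ => (hM u u' v v' h₁ h₂ h₃).1)
        ((symm hr).trans hc)
    refine ⟨fun r => M r c₀, fun c => M r₀ c / M r₀ c₀, fun r c hr hc => ?_⟩
    have hdet := (hM r₀ r c₀ c (hne _ _ hr₀ hc₀) (hne _ _ hr₀ hc) (hne _ _ hr hc₀)).2
    field_simp [hne _ _ hr₀ hc₀]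
    linear_combination hdet
  · push Not at hx
    exact ⟨0, 0, fun r c hr hc => absurd hc (hx r c hr)⟩

theorem blockRank1_iff_hasRankOneRectangles [Field α] {M : R → C → α} :
    BlockRank1 M ↔ HasRankOneRectangles M :=
  ⟨BlockRank1.hasRankOneRectangles, fun hM =>
    .of_forall_component (exists_factorization_on_component hM)⟩

end BlockRank1

theorem blockRank1_iff_all_two_by_two_general
    {R C : Type} (M : R → C → ℝ) :
    BlockRank1 M ↔
      ∀ (u u' : R) (v v' : C),
        BlockRank1 (fun i j : Fin 2 =>
          (!![M u v, M u v'; M u' v, M u' v'] : Matrix (Fin 2) (Fin 2) ℝ) i j) := by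
  refine ⟨fun hM u u' v v' => ?_, fun H => ?_⟩
  · have hsub : (fun i j : Fin 2 => (!![M u v, M u v'; M u' v, M u' v'] :
        Matrix (Fin 2) (Fin 2) ℝ) i j) = fun i j => M (![u, u'] i) (![v, v'] j) := by
      funext i j
      fin_cases i <;> fin_cases j <;> rfl
    rw [hsub]
    exact hM.submatrix _ _
  · refine blockRank1_iff_hasRankOneRectangles.mpr fun u u' v v' => ?_
    simpa using (H u u' v v').hasRankOneRectangles 0 1 0 1

/-- A real matrix `M` has block-rank 1 iff every `2×2`
submatrix `(M(u,v), M(u,v'); M(u',v), M(u',v'))` has block-rank 1. -/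
theorem blockRank1_iff_all_two_by_two
    {R C : Type} [Fintype R] [Fintype C] (M : R → C → ℝ) :
    BlockRank1 M ↔
      ∀ (u u' : R) (v v' : C),
        BlockRank1 (fun i j : Fin 2 =>
          (!![M u v, M u v'; M u' v, M u' v'] : Matrix (Fin 2) (Fin 2) ℝ) i j) :=
  blockRank1_iff_all_two_by_two_general M
end
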